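/- arXiv:0806.3380 — 2 statements merged into one kernel-verified Lean document; each statement's English description precedes it below -/
import Mathlib

section
/- Let H be a full additive subcategory of a triangulated category C which generates C, and let w be a weight structure on C whose heart contains H. Then the heart C_{w=0} equals the Karoubi envelope of H in C, i.e., an object of C belongs to C_{w=0} if and only if it is a retract (direct summand in C) of an object of H. -/
open CategoryTheory CategoryTheory.Limits CategoryTheory.Pretriangulated

universe v u

/-- The shift `S[n]` of a class of objects `S`: the objects isomorphic to `A⟦n⟧`
for some `A ∈ S`. -/
def shiftedSet {C : Type u} [Category.{v} C] [HasShift C ℤ] (S : Set C) (n : ℤ) : Set C :=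
  {X | ∃ A ∈ S, Nonempty (X ≅ A⟦n⟧)}

/-- A weight structure on a pretriangulated category `C`, following Bondarko. -/
structure WeightStructure (C : Type u) [Category.{v} C] [Preadditive C] [HasZeroObject C]
    [HasShift C ℤ] [∀ n : ℤ, (shiftFunctor C n).Additive] [Pretriangulated C] where
  /-- the objects of weights `≤ 0` -/
  le : Set C
  /-- the objects of weights `≥ 0` -/
  ge : Set C
  /-- `C_{w ≤ 0}` is closed under retracts -/
  retract_le : ∀ (X M : C) (i : X ⟶ M) (r : M ⟶ X), i ≫ r = 𝟙 X → M ∈ le → X ∈ le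
  /-- `C_{w ≥ 0}` is closed under retracts -/
  retract_ge : ∀ (X M : C) (i : X ⟶ M) (r : M ⟶ X), i ≫ r = 𝟙 X → M ∈ ge → X ∈ ge
  /-- `C_{w ≤ 0} ⊆ C_{w ≤ 1}` -/
  le_shift : le ⊆ shiftedSet le 1
  /-- `C_{w ≥ 1} ⊆ C_{w ≥ 0}` -/
  ge_shift : shiftedSet ge 1 ⊆ ge
  /-- orthogonality -/
  orth : ∀ (M N : C), M ∈ le → N ∈ shiftedSet ge 1 → ∀ f : M ⟶ N, f = 0
  /-- existence of weight filtrations -/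
  exists_wf : ∀ M : C, ∃ (A B : C) (a : A ⟶ M) (b : M ⟶ B) (δ : B ⟶ A⟦(1:ℤ)⟧),
    Triangle.mk a b δ ∈ (distTriang C) ∧ A ∈ le ∧ B ∈ shiftedSet ge 1

namespace WeightStructure

variable {C : Type u} [Category.{v} C] [Preadditive C] [HasZeroObject C]
  [HasShift C ℤ] [∀ n : ℤ, (shiftFunctor C n).Additive] [Pretriangulated C]

/-- `C_{w ≤ n} := C_{w ≤ 0}[n]`. -/
def wLE (w : WeightStructure C) (n : ℤ) : Set C := shiftedSet w.le n

/-- `C_{w ≥ n} := C_{w ≥ 0}[n]`. -/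
def wGE (w : WeightStructure C) (n : ℤ) : Set C := shiftedSet w.ge n

/-- The heart `C_{w = 0} := C_{w ≤ 0} ∩ C_{w ≥ 0}`. -/
def heart (w : WeightStructure C) : Set C := w.le ∩ w.ge

/-- An object `M` is without weights `m, …, n` if it admits a weight filtration
avoiding these weights. -/
def WithoutWeights (w : WeightStructure C) (m n : ℤ) (M : C) : Prop :=
  ∃ (A B : C) (a : A ⟶ M) (b : M ⟶ B) (δ : B ⟶ A⟦(1:ℤ)⟧),
    Triangle.mk a b δ ∈ (distTriang C) ∧ A ∈ w.wLE (m - 1) ∧ B ∈ w.wGE (n + 1)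

end WeightStructure

/-- `H` is a (full) additive subcategory of `C` : it contains the zero objects and is
closed under biproducts (direct sums) taken in `C`. -/
def IsAdditiveSubcategory {C : Type u} [Category.{v} C] [Preadditive C] (H : Set C) : Prop :=
  (∀ X : C, Limits.IsZero X → X ∈ H) ∧
  (∀ (X Y Z : C), X ∈ H → Y ∈ H →
    ∀ (iX : X ⟶ Z) (iY : Y ⟶ Z) (pX : Z ⟶ X) (pY : Z ⟶ Y),
      iX ≫ pX = 𝟙 X → iY ≫ pY = 𝟙 Y → iX ≫ pY = 0 → iY ≫ pX = 0 →
      pX ≫ iX + pY ≫ iY = 𝟙 Z → Z ∈ H)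

/-- The smallest class of objects of `C` containing `H` and closed under isomorphisms,
shifts, and cones of morphisms. -/
inductive IsGenerated {C : Type u} [Category.{v} C] [Preadditive C] [HasZeroObject C]
    [HasShift C ℤ] [∀ n : ℤ, (shiftFunctor C n).Additive] [Pretriangulated C]
    (H : Set C) : C → Prop
  | of {X : C} (hX : X ∈ H) : IsGenerated H X
  | iso {X Y : C} (e : X ≅ Y) (hX : IsGenerated H X) : IsGenerated H Y
  | shift {X : C} (n : ℤ) (hX : IsGenerated H X) : IsGenerated H (X⟦n⟧)
  | cone {X Y Z : C} (f : X ⟶ Y) (g : Y ⟶ Z) (h : Z ⟶ X⟦(1:ℤ)⟧)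
      (hT : Triangle.mk f g h ∈ distTriang C)
      (hX : IsGenerated H X) (hY : IsGenerated H Y) : IsGenerated H Z

/-- `H` generates `C` as a triangulated category. -/
def Generates {C : Type u} [Category.{v} C] [Preadditive C] [HasZeroObject C]
    [HasShift C ℤ] [∀ n : ℤ, (shiftFunctor C n).Additive] [Pretriangulated C]
    (H : Set C) : Prop :=
  ∀ X : C, IsGenerated H X

/-!
Write `E[a, b]` for the closure under isomorphisms and extensions of the objects `M⟦i⟧` with
`M ∈ H` and `a ≤ i ≤ b`; since `H` generates `C`, every object lies in some `E[a, b]` with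
`a ≤ 0 ≤ b`. For `Y ∈ E[a, b]` with `a < b` there is `m : N ⟶ Y` with `N ∈ E[a, b - 1]` such
that every morphism into `Y` from an object of weights `≤ b - 1` factors through `m`. It is built
along extensions by lifting the connecting morphism and completing a morphism of triangles; the
four lemma keeps the factorization property alive, provided `Hom(L, m)` is also injective one
weight lower. So a retract `X` of `Y` lying in the heart is a retract of `N`, and dually one
removes the lowest weight. After finitely many steps `X` is a retract of an object of `E[0, 0]`,
which lies in `H` because extensions of objects of the heart split.
-/

lemma mem_shiftedSet_of_iso {C : Type u} [Category.{v} C] [HasShift C ℤ] {S : Set C} {n : ℤ}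
    {X Y : C} (e : X ≅ Y) (hY : Y ∈ shiftedSet S n) : X ∈ shiftedSet S n := by
  obtain ⟨A, hA, ⟨e'⟩⟩ := hY
  exact ⟨A, hA, ⟨e ≪≫ e'⟩⟩

namespace WeightStructure

variable {C : Type u} [Category.{v} C] [Preadditive C] [HasZeroObject C]
  [HasShift C ℤ] [∀ n : ℤ, (shiftFunctor C n).Additive] [Pretriangulated C]
  (w : WeightStructure C)

lemma mem_le_of_iso {X Y : C} (e : X ≅ Y) (hY : Y ∈ w.le) : X ∈ w.le :=
  w.retract_le X Y e.hom e.inv e.hom_inv_id hY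

lemma mem_ge_of_iso {X Y : C} (e : X ≅ Y) (hY : Y ∈ w.ge) : X ∈ w.ge :=
  w.retract_ge X Y e.hom e.inv e.hom_inv_id hY

lemma shift_mem_le_of_nonpos {A : C} (hA : A ∈ w.le) {k : ℤ} (hk : k ≤ 0) : A⟦k⟧ ∈ w.le := by
  induction k, hk using Int.leInductionDown with
  | base => exact w.mem_le_of_iso ((shiftFunctorZero C ℤ).app A) hA
  | pred k _ ih =>
    obtain ⟨B, hB, ⟨e⟩⟩ := w.le_shift ih
    exact w.mem_le_of_iso ((shiftFunctorAdd' C k (-1) (k - 1) (by omega)).app A ≪≫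
      (shiftFunctor C (-1 : ℤ)).mapIso e ≪≫ (shiftFunctorCompIsoId C 1 (-1) (by omega)).app B) hB

lemma shift_mem_ge_of_nonneg {A : C} (hA : A ∈ w.ge) {k : ℤ} (hk : 0 ≤ k) : A⟦k⟧ ∈ w.ge := by
  induction k, hk using Int.leInduction with
  | base => exact w.mem_ge_of_iso ((shiftFunctorZero C ℤ).app A) hA
  | succ k _ ih => exact w.ge_shift ⟨_, ih, ⟨(shiftFunctorAdd' C k 1 (k + 1) rfl).app A⟩⟩

lemma shift_mem_wLE_of_mem_le {A : C} (hA : A ∈ w.le) {i n : ℤ} (h : i ≤ n) : A⟦i⟧ ∈ w.wLE n :=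
  ⟨A⟦i - n⟧, w.shift_mem_le_of_nonpos hA (by omega),
    ⟨(shiftFunctorAdd' C (i - n) n i (by ring)).app A⟩⟩

lemma shift_mem_wGE_of_mem_ge {A : C} (hA : A ∈ w.ge) {i n : ℤ} (h : n ≤ i) : A⟦i⟧ ∈ w.wGE n :=
  ⟨A⟦i - n⟧, w.shift_mem_ge_of_nonneg hA (by omega),
    ⟨(shiftFunctorAdd' C (i - n) n i (by ring)).app A⟩⟩

lemma mem_wLE_of_mem_le {X : C} (h : X ∈ w.le) {n : ℤ} (hn : 0 ≤ n) : X ∈ w.wLE n :=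
  mem_shiftedSet_of_iso ((shiftFunctorZero C ℤ).symm.app X) (w.shift_mem_wLE_of_mem_le h hn)

lemma mem_wGE_of_mem_ge {X : C} (h : X ∈ w.ge) {n : ℤ} (hn : n ≤ 0) : X ∈ w.wGE n :=
  mem_shiftedSet_of_iso ((shiftFunctorZero C ℤ).symm.app X) (w.shift_mem_wGE_of_mem_ge h hn)

lemma wLE_mono {m n : ℤ} (h : m ≤ n) : w.wLE m ⊆ w.wLE n := by
  rintro X ⟨A, hA, ⟨e⟩⟩
  exact mem_shiftedSet_of_iso e (w.shift_mem_wLE_of_mem_le hA h)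

lemma wGE_antitone {m n : ℤ} (h : n ≤ m) : w.wGE m ⊆ w.wGE n := by
  rintro X ⟨A, hA, ⟨e⟩⟩
  exact mem_shiftedSet_of_iso e (w.shift_mem_wGE_of_mem_ge hA h)

lemma shift_mem_wLE {X : C} {m : ℤ} (hX : X ∈ w.wLE m) {k n : ℤ} (h : m + k = n) :
    X⟦k⟧ ∈ w.wLE n := by
  obtain ⟨A, hA, ⟨e⟩⟩ := hX
  exact mem_shiftedSet_of_iso ((shiftFunctor C k).mapIso e ≪≫
    ((shiftFunctorAdd' C m k n h).app A).symm) (w.shift_mem_wLE_of_mem_le hA le_rfl)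

lemma shift_mem_wGE {X : C} {m : ℤ} (hX : X ∈ w.wGE m) {k n : ℤ} (h : m + k = n) :
    X⟦k⟧ ∈ w.wGE n := by
  obtain ⟨A, hA, ⟨e⟩⟩ := hX
  exact mem_shiftedSet_of_iso ((shiftFunctor C k).mapIso e ≪≫
    ((shiftFunctorAdd' C m k n h).app A).symm) (w.shift_mem_wGE_of_mem_ge hA le_rfl)

lemma hom_eq_zero {X Y : C} {m n : ℤ} (hX : X ∈ w.wLE m) (hY : Y ∈ w.wGE n) (h : m < n)
    (f : X ⟶ Y) : f = 0 := by
  obtain ⟨A, hA, ⟨eX⟩⟩ := hX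
  have hY' : Y⟦-m⟧ ∈ shiftedSet w.ge 1 :=
    w.wGE_antitone (by omega) (w.shift_mem_wGE hY (k := -m) rfl)
  have hA' : A⟦m⟧⟦-m⟧ ∈ w.le :=
    w.mem_le_of_iso ((shiftFunctorCompIsoId C m (-m) (by omega)).app A) hA
  have hf : (shiftFunctor C (-m)).map f = 0 := by
    rw [← cancel_epi ((shiftFunctor C (-m)).map eX.inv), comp_zero]
    exact w.orth _ _ hA' hY' _
  exact (shiftFunctor C (-m)).map_injective (by rw [hf, Functor.map_zero])

lemma mem_wLE_of_forall_hom_eq_zero {X : C} (n : ℤ)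
    (h : ∀ G ∈ w.wGE (n + 1), ∀ f : X ⟶ G, f = 0) : X ∈ w.wLE n := by
  obtain ⟨A, B, a, b, δ, hT, hA, hB⟩ := w.exists_wf (X⟦-n⟧)
  let e := (shiftFunctorCompIsoId C (-n) n (by omega)).app X
  have hb : b = 0 := by
    apply (shiftFunctor C n).map_injective
    rw [Functor.map_zero, ← cancel_epi e.inv, comp_zero]
    exact h _ (w.shift_mem_wGE hB (by ring)) _
  obtain ⟨g, hg⟩ := Triangle.coyoneda_exact₂ _ hT (𝟙 (X⟦-n⟧))
    (by change 𝟙 _ ≫ b = 0; rw [hb, comp_zero])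
  have hXn : X⟦-n⟧ ∈ w.le := w.retract_le _ A g a hg.symm hA
  exact mem_shiftedSet_of_iso e.symm (w.shift_mem_wLE_of_mem_le hXn le_rfl)

lemma mem_wGE_of_forall_hom_eq_zero {X : C} (n : ℤ)
    (h : ∀ L ∈ w.wLE (n - 1), ∀ f : L ⟶ X, f = 0) : X ∈ w.wGE n := by
  obtain ⟨A, B, a, b, δ, hT, hA, ⟨B', hB', ⟨eB⟩⟩⟩ := w.exists_wf (X⟦1 - n⟧)
  let e := (shiftFunctorCompIsoId C (1 - n) (n - 1) (by omega)).app X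
  have ha : a = 0 := by
    apply (shiftFunctor C (n - 1)).map_injective
    rw [Functor.map_zero, ← cancel_mono e.hom, zero_comp]
    exact h _ (w.shift_mem_wLE_of_mem_le hA le_rfl) _
  obtain ⟨g, hg⟩ : ∃ g : B ⟶ X⟦1 - n⟧, 𝟙 _ = b ≫ g :=
    Triangle.yoneda_exact₂ _ hT _ (by change a ≫ 𝟙 _ = 0; rw [ha, zero_comp])
  -- `X⟦1 - n⟧` is a retract of `B ≅ B'⟦1⟧`; shift back by `-1`.
  have hXn : X⟦1 - n⟧⟦-1⟧ ∈ w.ge := by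
    refine w.retract_ge _ (B'⟦(1 : ℤ)⟧⟦-1⟧) ((shiftFunctor C (-1 : ℤ)).map (b ≫ eB.hom))
      ((shiftFunctor C (-1 : ℤ)).map (eB.inv ≫ g)) ?_
      (w.mem_ge_of_iso ((shiftFunctorCompIsoId C 1 (-1) (by omega)).app B') hB')
    rw [← Functor.map_comp, Category.assoc, eB.hom_inv_id_assoc, ← hg,
      CategoryTheory.Functor.map_id]
  exact mem_shiftedSet_of_iso (e.symm ≪≫ (shiftFunctorAdd' C (-1) n (n - 1) (by ring)).app _)
    (w.shift_mem_wGE_of_mem_ge hXn le_rfl)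

lemma mem_wLE_of_distTriang {T : Triangle C} (hT : T ∈ distTriang C) {n : ℤ}
    (h₁ : T.obj₁ ∈ w.wLE n) (h₃ : T.obj₃ ∈ w.wLE n) : T.obj₂ ∈ w.wLE n := by
  refine w.mem_wLE_of_forall_hom_eq_zero n fun G hG f => ?_
  obtain ⟨g, rfl⟩ := Triangle.yoneda_exact₂ _ hT f (w.hom_eq_zero h₁ hG (by omega) _)
  rw [w.hom_eq_zero h₃ hG (by omega) g, comp_zero]

lemma mem_wGE_of_distTriang {T : Triangle C} (hT : T ∈ distTriang C) {n : ℤ}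
    (h₁ : T.obj₁ ∈ w.wGE n) (h₃ : T.obj₃ ∈ w.wGE n) : T.obj₂ ∈ w.wGE n := by
  refine w.mem_wGE_of_forall_hom_eq_zero n fun L hL f => ?_
  obtain ⟨g, rfl⟩ := Triangle.coyoneda_exact₂ _ hT f (w.hom_eq_zero hL h₃ (by omega) _)
  rw [w.hom_eq_zero hL h₁ (by omega) g, zero_comp]

end WeightStructure

/-! Four lemmas for `Hom(A, -)` and `Hom(-, G)` along a morphism of distinguished triangles. -/

namespace CategoryTheory.Pretriangulated.TriangleMorphism

variable {C : Type u} [Category.{v} C] [Preadditive C] [HasZeroObject C]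
  [HasShift C ℤ] [∀ n : ℤ, (shiftFunctor C n).Additive] [Pretriangulated C]
  {T T' : Triangle C} (φ : T ⟶ T') (hT : T ∈ distTriang C) (hT' : T' ∈ distTriang C)

include hT hT'

lemma exists_comp_hom₂_eq {A : C} (h₁ : ∀ y : A ⟶ T'.obj₁, ∃ x, x ≫ φ.hom₁ = y)
    (h₃ : ∀ y : A ⟶ T'.obj₃, ∃ x, x ≫ φ.hom₃ = y)
    (h₄ : ∀ x : A ⟶ T.obj₁⟦(1 : ℤ)⟧, x ≫ φ.hom₁⟦1⟧' = 0 → x = 0)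
    (y : A ⟶ T'.obj₂) : ∃ x, x ≫ φ.hom₂ = y := by
  obtain ⟨x₃, hx₃⟩ := h₃ (y ≫ T'.mor₂)
  obtain ⟨x₂, hx₂⟩ := Triangle.coyoneda_exact₃ _ hT x₃ (h₄ _ (by
    rw [Category.assoc, φ.comm₃, reassoc_of% hx₃, comp_distTriang_mor_zero₂₃ _ hT', comp_zero]))
  obtain ⟨y₁, hy₁⟩ := Triangle.coyoneda_exact₂ _ hT' (y - x₂ ≫ φ.hom₂) (by
    rw [Preadditive.sub_comp, Category.assoc, ← φ.comm₂, ← reassoc_of% hx₂, hx₃, sub_self])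
  obtain ⟨x₁, hx₁⟩ := h₁ y₁
  refine ⟨x₂ + x₁ ≫ T.mor₁, ?_⟩
  rw [Preadditive.add_comp, Category.assoc, φ.comm₁, reassoc_of% hx₁, ← hy₁, add_sub_cancel]

lemma eq_zero_of_comp_hom₂_eq_zero {A : C} (h₁ : ∀ x : A ⟶ T.obj₁, x ≫ φ.hom₁ = 0 → x = 0)
    (h₃ : ∀ x : A ⟶ T.obj₃, x ≫ φ.hom₃ = 0 → x = 0)
    (h₀ : ∀ y : A ⟶ T'.obj₃⟦(-1 : ℤ)⟧, ∃ x, x ≫ φ.hom₃⟦-1⟧' = y)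
    (x : A ⟶ T.obj₂) (hx : x ≫ φ.hom₂ = 0) : x = 0 := by
  let ι : T.obj₃⟦(-1 : ℤ)⟧ ⟶ T.obj₁ := T.invRotate.mor₁
  let ι' : T'.obj₃⟦(-1 : ℤ)⟧ ⟶ T'.obj₁ := T'.invRotate.mor₁
  have hι : ι ≫ T.mor₁ = 0 := comp_distTriang_mor_zero₁₂ _ (inv_rot_of_distTriang _ hT)
  have hcomm : ι ≫ φ.hom₁ = φ.hom₃⟦-1⟧' ≫ ι' := ((invRotate C).map φ).comm₁
  obtain ⟨g, rfl⟩ := Triangle.coyoneda_exact₂ _ hT x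
    (h₃ _ (by rw [Category.assoc, φ.comm₂, reassoc_of% hx, zero_comp]))
  obtain ⟨k, hk⟩ : ∃ k, g ≫ φ.hom₁ = k ≫ ι' :=
    Triangle.coyoneda_exact₂ _ (inv_rot_of_distTriang _ hT') _
      (by change (g ≫ φ.hom₁) ≫ T'.mor₁ = 0; rw [Category.assoc, ← φ.comm₁, ← Category.assoc, hx])
  obtain ⟨l, rfl⟩ := h₀ k
  have hg : g = l ≫ ι := by
    rw [← sub_eq_zero]
    refine h₁ _ ?_
    rw [Preadditive.sub_comp, hk, Category.assoc, Category.assoc, hcomm, sub_self]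
  rw [hg, Category.assoc, hι, comp_zero]

lemma exists_hom₂_comp_eq {G : C} (h₁ : ∀ y : T.obj₁ ⟶ G, ∃ x, φ.hom₁ ≫ x = y)
    (h₃ : ∀ y : T.obj₃ ⟶ G, ∃ x, φ.hom₃ ≫ x = y)
    (h₀ : ∀ x : T'.obj₃⟦(-1 : ℤ)⟧ ⟶ G, φ.hom₃⟦-1⟧' ≫ x = 0 → x = 0)
    (y : T.obj₂ ⟶ G) : ∃ x, φ.hom₂ ≫ x = y := by
  let ι : T.obj₃⟦(-1 : ℤ)⟧ ⟶ T.obj₁ := T.invRotate.mor₁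
  let ι' : T'.obj₃⟦(-1 : ℤ)⟧ ⟶ T'.obj₁ := T'.invRotate.mor₁
  have hι : ι ≫ T.mor₁ = 0 := comp_distTriang_mor_zero₁₂ _ (inv_rot_of_distTriang _ hT)
  have hcomm : ι ≫ φ.hom₁ = φ.hom₃⟦-1⟧' ≫ ι' := ((invRotate C).map φ).comm₁
  obtain ⟨x₁, hx₁⟩ := h₁ (T.mor₁ ≫ y)
  have hx₁' : ι' ≫ x₁ = 0 := h₀ _ (by
    rw [← Category.assoc, ← hcomm, Category.assoc, hx₁, ← Category.assoc, hι, zero_comp])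
  obtain ⟨x₂, hx₂⟩ : ∃ x₂ : T'.obj₂ ⟶ G, x₁ = T'.mor₁ ≫ x₂ :=
    Triangle.yoneda_exact₂ _ (inv_rot_of_distTriang _ hT') x₁ hx₁'
  obtain ⟨y₃, hy₃⟩ := Triangle.yoneda_exact₂ _ hT (y - φ.hom₂ ≫ x₂) (by
    rw [Preadditive.comp_sub, ← Category.assoc, φ.comm₁, Category.assoc, ← hx₂, hx₁, sub_self])
  obtain ⟨x₃, hx₃⟩ := h₃ y₃
  refine ⟨x₂ + T'.mor₂ ≫ x₃, ?_⟩
  rw [Preadditive.comp_add, ← Category.assoc, ← φ.comm₂, Category.assoc, hx₃, ← hy₃,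
    add_sub_cancel]

lemma eq_zero_of_hom₂_comp_eq_zero {G : C} (h₁ : ∀ x : T'.obj₁ ⟶ G, φ.hom₁ ≫ x = 0 → x = 0)
    (h₃ : ∀ x : T'.obj₃ ⟶ G, φ.hom₃ ≫ x = 0 → x = 0)
    (h₄ : ∀ y : T.obj₁⟦(1 : ℤ)⟧ ⟶ G, ∃ x, φ.hom₁⟦1⟧' ≫ x = y)
    (x : T'.obj₂ ⟶ G) (hx : φ.hom₂ ≫ x = 0) : x = 0 := by
  obtain ⟨y, rfl⟩ := Triangle.yoneda_exact₂ _ hT' x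
    (h₁ _ (by rw [← Category.assoc, ← φ.comm₁, Category.assoc, hx, comp_zero]))
  obtain ⟨z, hz⟩ := Triangle.yoneda_exact₃ _ hT (φ.hom₃ ≫ y)
    (by rw [← Category.assoc, φ.comm₂, Category.assoc, hx])
  obtain ⟨z', rfl⟩ := h₄ z
  have hy : y = T'.mor₃ ≫ z' := by
    rw [← sub_eq_zero]
    refine h₃ _ ?_
    rw [Preadditive.comp_sub, hz, ← Category.assoc, φ.comm₃, Category.assoc, sub_self]
  rw [hy, ← Category.assoc, comp_distTriang_mor_zero₂₃ _ hT', zero_comp]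

end CategoryTheory.Pretriangulated.TriangleMorphism

namespace WeightStructure

variable {C : Type u} [Category.{v} C] [Preadditive C] [HasZeroObject C]
  [HasShift C ℤ] [∀ n : ℤ, (shiftFunctor C n).Additive] [Pretriangulated C]
  {w : WeightStructure C} {c : ℤ}

/-- Mimics `m` having a cone of weights `≥ c + 1`, in a form that passes to extensions
without the octahedral axiom. -/
structure IsLeftApprox (w : WeightStructure C) (c : ℤ) {N Y : C} (m : N ⟶ Y) : Prop where
  exists_lift : ∀ L ∈ w.wLE c, ∀ y : L ⟶ Y, ∃ x, x ≫ m = y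
  eq_zero : ∀ L ∈ w.wLE (c - 1), ∀ x : L ⟶ N, x ≫ m = 0 → x = 0

/-- The dual of `IsLeftApprox`: mimics `m` having a cocone of weights `≤ c - 1`. -/
structure IsRightApprox (w : WeightStructure C) (c : ℤ) {Y M : C} (m : Y ⟶ M) : Prop where
  exists_ext : ∀ G ∈ w.wGE c, ∀ y : Y ⟶ G, ∃ x, m ≫ x = y
  eq_zero : ∀ G ∈ w.wGE (c + 1), ∀ x : M ⟶ G, m ≫ x = 0 → x = 0

namespace IsLeftApprox

lemma of_isIso {N Y : C} (m : N ⟶ Y) [IsIso m] : w.IsLeftApprox c m where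
  exists_lift _ _ y := ⟨y ≫ inv m, by simp⟩
  eq_zero _ _ x hx := by rwa [← cancel_mono m, zero_comp]

lemma of_isZero {N Y : C} (hN : IsZero N) (hY : Y ∈ w.wGE (c + 1)) (m : N ⟶ Y) :
    w.IsLeftApprox c m where
  exists_lift _ hL y := ⟨0, by rw [zero_comp, w.hom_eq_zero hL hY (by omega) y]⟩
  eq_zero _ _ x _ := hN.eq_of_tgt x 0

lemma comp_isIso {N Y Y' : C} {m : N ⟶ Y} (hm : w.IsLeftApprox c m) (f : Y ⟶ Y') [IsIso f] :
    w.IsLeftApprox c (m ≫ f) where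
  exists_lift L hL y := by
    obtain ⟨x, hx⟩ := hm.exists_lift L hL (y ≫ inv f)
    exact ⟨x, by simp [reassoc_of% hx]⟩
  eq_zero L hL x hx := hm.eq_zero L hL x (by rwa [← cancel_mono f, zero_comp, Category.assoc])

lemma shift {N Y : C} {m : N ⟶ Y} (hm : w.IsLeftApprox c m) (n : ℤ) :
    w.IsLeftApprox (c + n) (m⟦n⟧') := by
  let adj : shiftFunctor C (-n) ⊣ shiftFunctor C n :=
    (shiftEquiv' C (-n) n (by omega)).toAdjunction
  refine ⟨fun L hL y => ?_, fun L hL x hx => ?_⟩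
  · obtain ⟨x, hx⟩ := hm.exists_lift _ (w.shift_mem_wLE hL (by ring)) ((adj.homEquiv _ _).symm y)
    exact ⟨adj.homEquiv _ _ x, by
      rw [← adj.homEquiv_naturality_right, hx, Equiv.apply_symm_apply]⟩
  · have := hm.eq_zero _ (w.shift_mem_wLE hL (by ring)) ((adj.homEquiv _ _).symm x) (by
      rw [← adj.homEquiv_naturality_right_symm, hx, ← adj.homAddEquiv_symm_apply, map_zero])
    rwa [← adj.homAddEquiv_symm_apply, map_eq_zero_iff _ (AddEquiv.injective _)] at this

end IsLeftApprox

namespace IsRightApprox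

lemma of_isIso {Y M : C} (m : Y ⟶ M) [IsIso m] : w.IsRightApprox c m where
  exists_ext _ _ y := ⟨inv m ≫ y, by simp⟩
  eq_zero _ _ x hx := by rwa [← cancel_epi m, comp_zero]

lemma of_isZero {Y M : C} (hY : Y ∈ w.wLE (c - 1)) (hM : IsZero M) (m : Y ⟶ M) :
    w.IsRightApprox c m where
  exists_ext _ hG y := ⟨0, by rw [comp_zero, w.hom_eq_zero hY hG (by omega) y]⟩
  eq_zero _ _ x _ := hM.eq_of_src x 0

lemma isIso_comp {Y' Y M : C} {m : Y ⟶ M} (hm : w.IsRightApprox c m) (f : Y' ⟶ Y) [IsIso f] :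
    w.IsRightApprox c (f ≫ m) where
  exists_ext G hG y := by
    obtain ⟨x, hx⟩ := hm.exists_ext G hG (inv f ≫ y)
    exact ⟨x, by simp [hx]⟩
  eq_zero G hG x hx := hm.eq_zero G hG x (by rwa [← cancel_epi f, comp_zero, ← Category.assoc])

lemma shift {Y M : C} {m : Y ⟶ M} (hm : w.IsRightApprox c m) (n : ℤ) :
    w.IsRightApprox (c + n) (m⟦n⟧') := by
  let adj : shiftFunctor C n ⊣ shiftFunctor C (-n) :=
    (shiftEquiv' C n (-n) (by omega)).toAdjunction
  refine ⟨fun G hG y => ?_, fun G hG x hx => ?_⟩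
  · obtain ⟨x, hx⟩ := hm.exists_ext _ (w.shift_mem_wGE hG (by ring)) (adj.homEquiv _ _ y)
    exact ⟨(adj.homEquiv _ _).symm x, by
      rw [← adj.homEquiv_naturality_left_symm, hx, Equiv.symm_apply_apply]⟩
  · have := hm.eq_zero _ (w.shift_mem_wGE hG (by ring)) (adj.homEquiv _ _ x) (by
      rw [← adj.homEquiv_naturality_left, hx, adj.homAddEquiv_zero])
    rwa [← adj.homAddEquiv_apply, map_eq_zero_iff _ (AddEquiv.injective _)] at this

end IsRightApprox

lemma IsLeftApprox.exists_distTriang {T : Triangle C} (hT : T ∈ distTriang C) {N₁ N₃ : C}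
    {m₁ : N₁ ⟶ T.obj₁} {m₃ : N₃ ⟶ T.obj₃} (hm₁ : w.IsLeftApprox c m₁)
    (hm₃ : w.IsLeftApprox c m₃) (hN₃ : N₃ ∈ w.wLE (c + 1)) :
    ∃ (N : C) (f : N₁ ⟶ N) (g : N ⟶ N₃) (δ : N₃ ⟶ N₁⟦(1 : ℤ)⟧) (m : N ⟶ T.obj₂),
      Triangle.mk f g δ ∈ distTriang C ∧ w.IsLeftApprox c m := by
  obtain ⟨δ, hδ⟩ := (hm₁.shift 1).exists_lift N₃ hN₃ (m₃ ≫ T.mor₃)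
  obtain ⟨N, f, g, hT'⟩ := distinguished_cocone_triangle₂ δ
  obtain ⟨m, hm₁₂, hm₂₃⟩ := complete_distinguished_triangle_morphism₂ _ T hT' hT m₁ m₃ hδ
  let φ : Triangle.mk f g δ ⟶ T := Triangle.homMk _ _ m₁ m m₃ hm₁₂ hm₂₃ hδ
  refine ⟨N, f, g, δ, m, hT', fun L hL y => ?_, fun L hL x hx => ?_⟩
  · exact φ.exists_comp_hom₂_eq hT' hT (hm₁.exists_lift L hL) (hm₃.exists_lift L hL)
      ((hm₁.shift 1).eq_zero L (by rwa [add_sub_cancel_right])) y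
  · exact φ.eq_zero_of_comp_hom₂_eq_zero hT' hT (hm₁.eq_zero L hL) (hm₃.eq_zero L hL)
      ((hm₃.shift (-1)).exists_lift L (by rwa [← sub_eq_add_neg])) x hx

lemma IsRightApprox.exists_distTriang {T : Triangle C} (hT : T ∈ distTriang C) {M₁ M₃ : C}
    {m₁ : T.obj₁ ⟶ M₁} {m₃ : T.obj₃ ⟶ M₃} (hm₁ : w.IsRightApprox c m₁)
    (hm₃ : w.IsRightApprox c m₃) (hM₁ : M₁ ∈ w.wGE (c - 1)) :
    ∃ (M : C) (f : M₁ ⟶ M) (g : M ⟶ M₃) (δ : M₃ ⟶ M₁⟦(1 : ℤ)⟧) (m : T.obj₂ ⟶ M),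
      Triangle.mk f g δ ∈ distTriang C ∧ w.IsRightApprox c m := by
  obtain ⟨δ, hδ⟩ := hm₃.exists_ext _ (w.shift_mem_wGE hM₁ (by ring)) (T.mor₃ ≫ m₁⟦1⟧')
  obtain ⟨M, f, g, hT'⟩ := distinguished_cocone_triangle₂ δ
  obtain ⟨m, hm₁₂, hm₂₃⟩ := complete_distinguished_triangle_morphism₂ T _ hT hT' m₁ m₃ hδ.symm
  let φ : T ⟶ Triangle.mk f g δ := Triangle.homMk _ _ m₁ m m₃ hm₁₂ hm₂₃ hδ.symm
  refine ⟨M, f, g, δ, m, hT', fun G hG y => ?_, fun G hG x hx => ?_⟩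
  · exact φ.exists_hom₂_comp_eq hT hT' (hm₁.exists_ext G hG) (hm₃.exists_ext G hG)
      ((hm₃.shift (-1)).eq_zero G (by rwa [neg_add_cancel_right])) y
  · exact φ.eq_zero_of_hom₂_comp_eq_zero hT hT' (hm₁.eq_zero G hG) (hm₃.eq_zero G hG)
      ((hm₁.shift 1).exists_ext G hG) x hx

end WeightStructure

section Pieces

variable {C : Type u} [Category.{v} C] [HasShift C ℤ]

def piecesSet (H : Set C) (a b : ℤ) : Set C :=
  {X | ∃ M ∈ H, ∃ i : ℤ, a ≤ i ∧ i ≤ b ∧ Nonempty (X ≅ M⟦i⟧)}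

variable {H : Set C}

lemma piecesSet_mono {a b a' b' : ℤ} (ha : a' ≤ a) (hb : b ≤ b') :
    piecesSet H a b ⊆ piecesSet H a' b' := by
  rintro X ⟨M, hM, i, h₁, h₂, he⟩
  exact ⟨M, hM, i, by omega, by omega, he⟩

open ZeroObject in
lemma zero_mem_piecesSet [Preadditive C] [HasZeroObject C]
    [∀ n : ℤ, (shiftFunctor C n).Additive] (h₀ : (0 : C) ∈ H) (i : ℤ) :
    (0 : C) ∈ piecesSet H i i :=
  ⟨0, h₀, i, le_rfl, le_rfl,
    ⟨(isZero_zero C).iso ((shiftFunctor C i).map_isZero (isZero_zero C))⟩⟩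

end Pieces

section ExtClosure

open ZeroObject

variable {C : Type u} [Category.{v} C] [Preadditive C] [HasZeroObject C]
  [HasShift C ℤ] [∀ n : ℤ, (shiftFunctor C n).Additive] [Pretriangulated C]

inductive ExtClosure (S : Set C) : C → Prop
  | of {X : C} (hX : X ∈ S) : ExtClosure S X
  | iso {X Y : C} (e : X ≅ Y) (hY : ExtClosure S Y) : ExtClosure S X
  | ext (T : Triangle C) (hT : T ∈ distTriang C) (h₁ : ExtClosure S T.obj₁)
      (h₃ : ExtClosure S T.obj₃) : ExtClosure S T.obj₂

lemma ExtClosure.mono {S S' : Set C} (h : S ⊆ S') {X : C} (hX : ExtClosure S X) :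
    ExtClosure S' X := by
  induction hX with
  | of hX => exact .of (h hX)
  | iso e _ ih => exact .iso e ih
  | ext T hT _ _ ih₁ ih₃ => exact .ext T hT ih₁ ih₃

variable {H : Set C}

lemma ExtClosure.shift_piecesSet {a b : ℤ} {X : C} (hX : ExtClosure (piecesSet H a b) X)
    (n : ℤ) : ExtClosure (piecesSet H (a + n) (b + n)) (X⟦n⟧) := by
  induction hX with
  | of hX =>
    obtain ⟨M, hM, i, h₁, h₂, ⟨e⟩⟩ := hX
    exact .of ⟨M, hM, i + n, by omega, by omega,
      ⟨(shiftFunctor C n).mapIso e ≪≫ ((shiftFunctorAdd' C i n (i + n) rfl).app M).symm⟩⟩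
  | iso e _ ih => exact .iso ((shiftFunctor C n).mapIso e) ih
  | ext T hT _ _ ih₁ ih₃ => exact .ext _ (Triangle.shift_distinguished T hT n) ih₁ ih₃

lemma exists_extClosure_piecesSet_of_isGenerated {X : C} (hX : IsGenerated H X) :
    ∃ a b : ℤ, a ≤ 0 ∧ 0 ≤ b ∧ ExtClosure (piecesSet H a b) X := by
  induction hX with
  | @of X hX =>
    exact ⟨0, 0, le_rfl, le_rfl,
      .of ⟨X, hX, 0, le_rfl, le_rfl, ⟨((shiftFunctorZero C ℤ).app X).symm⟩⟩⟩
  | iso e _ ih =>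
    obtain ⟨a, b, ha, hb, h⟩ := ih
    exact ⟨a, b, ha, hb, .iso e.symm h⟩
  | shift n _ ih =>
    obtain ⟨a, b, ha, hb, h⟩ := ih
    exact ⟨min (a + n) 0, max (b + n) 0, by omega, by omega,
      (h.shift_piecesSet n).mono (piecesSet_mono (by omega) (by omega))⟩
  | cone f g h hT _ _ ihX ihY =>
    obtain ⟨a₁, b₁, ha₁, hb₁, h₁⟩ := ihX
    obtain ⟨a₂, b₂, ha₂, hb₂, h₂⟩ := ihY
    exact ⟨min (a₁ + 1) a₂, max (b₁ + 1) b₂, by omega, by omega,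
      .ext _ (rot_of_distTriang _ hT) (h₂.mono (piecesSet_mono (by omega) (by omega)))
        ((h₁.shift_piecesSet 1).mono (piecesSet_mono (by omega) (by omega)))⟩

variable {w : WeightStructure C}

lemma ExtClosure.mem_wLE (hH : H ⊆ w.le) {a b : ℤ} {X : C}
    (hX : ExtClosure (piecesSet H a b) X) : X ∈ w.wLE b := by
  induction hX with
  | of hX =>
    obtain ⟨M, hM, i, -, hi, ⟨e⟩⟩ := hX
    exact mem_shiftedSet_of_iso e (w.shift_mem_wLE_of_mem_le (hH hM) hi)
  | iso e _ ih => exact mem_shiftedSet_of_iso e ih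
  | ext T hT _ _ ih₁ ih₃ => exact w.mem_wLE_of_distTriang hT ih₁ ih₃

lemma ExtClosure.mem_wGE (hH : H ⊆ w.ge) {a b : ℤ} {X : C}
    (hX : ExtClosure (piecesSet H a b) X) : X ∈ w.wGE a := by
  induction hX with
  | of hX =>
    obtain ⟨M, hM, i, hi, -, ⟨e⟩⟩ := hX
    exact mem_shiftedSet_of_iso e (w.shift_mem_wGE_of_mem_ge (hH hM) hi)
  | iso e _ ih => exact mem_shiftedSet_of_iso e ih
  | ext T hT _ _ ih₁ ih₃ => exact w.mem_wGE_of_distTriang hT ih₁ ih₃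

lemma ExtClosure.exists_isLeftApprox (h₀ : (0 : C) ∈ H) (hw : H ⊆ w.heart) {a b : ℤ}
    (hab : a < b) {Y : C} (hY : ExtClosure (piecesSet H a b) Y) :
    ∃ N, ExtClosure (piecesSet H a (b - 1)) N ∧ ∃ m : N ⟶ Y, w.IsLeftApprox (b - 1) m := by
  induction hY with
  | of hY =>
    obtain ⟨M, hM, i, hai, hib, ⟨e⟩⟩ := hY
    by_cases hi : i ≤ b - 1
    · exact ⟨_, .of ⟨M, hM, i, hai, hi, ⟨e⟩⟩, 𝟙 _, .of_isIso _⟩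
    · refine ⟨0, .of (piecesSet_mono le_rfl (by omega) (zero_mem_piecesSet h₀ a)), 0,
        .of_isZero (isZero_zero C) ?_ _⟩
      exact mem_shiftedSet_of_iso e (w.shift_mem_wGE_of_mem_ge (hw hM).2 (by omega))
  | iso e _ ih =>
    obtain ⟨N, hN, m, hm⟩ := ih
    exact ⟨N, hN, m ≫ e.inv, hm.comp_isIso _⟩
  | ext T hT _ _ ih₁ ih₃ =>
    obtain ⟨N₁, hN₁, m₁, hm₁⟩ := ih₁
    obtain ⟨N₃, hN₃, m₃, hm₃⟩ := ih₃
    obtain ⟨N, f, g, δ, m, hT', hm⟩ := hm₁.exists_distTriang hT hm₃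
      (w.wLE_mono (by omega) (hN₃.mem_wLE fun _ hM => (hw hM).1))
    exact ⟨N, .ext _ hT' hN₁ hN₃, m, hm⟩

lemma ExtClosure.exists_isRightApprox (h₀ : (0 : C) ∈ H) (hw : H ⊆ w.heart) {a b : ℤ}
    (hab : a < b) {Y : C} (hY : ExtClosure (piecesSet H a b) Y) :
    ∃ M, ExtClosure (piecesSet H (a + 1) b) M ∧ ∃ m : Y ⟶ M, w.IsRightApprox (a + 1) m := by
  induction hY with
  | of hY =>
    obtain ⟨M, hM, i, hai, hib, ⟨e⟩⟩ := hY
    by_cases hi : a + 1 ≤ i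
    · exact ⟨_, .of ⟨M, hM, i, hi, hib, ⟨e⟩⟩, 𝟙 _, .of_isIso _⟩
    · refine ⟨0, .of (piecesSet_mono (by omega) le_rfl (zero_mem_piecesSet h₀ b)), 0,
        .of_isZero ?_ (isZero_zero C) _⟩
      exact mem_shiftedSet_of_iso e (w.shift_mem_wLE_of_mem_le (hw hM).1 (by omega))
  | iso e _ ih =>
    obtain ⟨M, hM, m, hm⟩ := ih
    exact ⟨M, hM, e.hom ≫ m, hm.isIso_comp _⟩
  | ext T hT _ _ ih₁ ih₃ =>
    obtain ⟨M₁, hM₁, m₁, hm₁⟩ := ih₁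
    obtain ⟨M₃, hM₃, m₃, hm₃⟩ := ih₃
    obtain ⟨M, f, g, δ, m, hT', hm⟩ := hm₁.exists_distTriang hT hm₃
      (w.wGE_antitone (by omega) (hM₁.mem_wGE fun _ hM => (hw hM).2))
    exact ⟨M, .ext _ hT' hM₁ hM₃, m, hm⟩

end ExtClosure

namespace IsAdditiveSubcategory

open ZeroObject

variable {C : Type u} [Category.{v} C] [Preadditive C] {H : Set C}
  (hadd : IsAdditiveSubcategory H)
include hadd

lemma biprod_mem {X Y : C} [HasBinaryBiproduct X Y] (hX : X ∈ H) (hY : Y ∈ H) : (X ⊞ Y) ∈ H :=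
  hadd.2 X Y _ hX hY biprod.inl biprod.inr biprod.fst biprod.snd (by simp) (by simp) (by simp)
    (by simp) biprod.total

variable [HasZeroObject C]

lemma zero_mem : (0 : C) ∈ H :=
  hadd.1 _ (isZero_zero C)

lemma mem_of_iso {X Y : C} (e : X ≅ Y) (hY : Y ∈ H) : X ∈ H :=
  hadd.2 Y 0 X hY hadd.zero_mem e.inv 0 e.hom 0 e.inv_hom_id ((isZero_zero C).eq_of_src _ _)
    (by simp) (by simp) (by simp)

variable [HasShift C ℤ] [∀ n : ℤ, (shiftFunctor C n).Additive] [Pretriangulated C]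
  {w : WeightStructure C}

lemma mem_of_extClosure_piecesSet_zero (hw : H ⊆ w.heart) {Y : C}
    (hY : ExtClosure (piecesSet H 0 0) Y) : Y ∈ H := by
  induction hY with
  | of hY =>
    obtain ⟨M, hM, i, h₁, h₂, ⟨e⟩⟩ := hY
    obtain rfl : i = 0 := by omega
    exact hadd.mem_of_iso (e ≪≫ (shiftFunctorZero C ℤ).app M) hM
  | iso e _ ih => exact hadd.mem_of_iso e ih
  | ext T hT _ _ ih₁ ih₃ =>
    have hmor₃ : T.mor₃ = 0 := w.hom_eq_zero (w.mem_wLE_of_mem_le (hw ih₃).1 le_rfl)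
      (w.shift_mem_wGE_of_mem_ge (hw ih₁).2 le_rfl) zero_lt_one _
    obtain ⟨e, -, -⟩ := exists_iso_binaryBiproduct_of_distTriang T hT hmor₃
    exact hadd.mem_of_iso e (hadd.biprod_mem ih₁ ih₃)

lemma exists_retract_of_extClosure_nonpos (hw : H ⊆ w.heart) {X : C} (hX : X ∈ w.heart)
    {a : ℤ} (ha : a ≤ 0) {Y : C} (hY : ExtClosure (piecesSet H a 0) Y) (e : Retract X Y) :
    ∃ M ∈ H, Nonempty (Retract X M) := by
  induction a, ha using Int.leInductionDown generalizing Y with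
  | base => exact ⟨Y, hadd.mem_of_extClosure_piecesSet_zero hw hY, ⟨e⟩⟩
  | pred a ha ih =>
    obtain ⟨M, hM, m, hm⟩ := hY.exists_isRightApprox hadd.zero_mem hw (by omega)
    obtain ⟨r, hr⟩ := hm.exists_ext X (w.mem_wGE_of_mem_ge hX.2 (by omega)) e.r
    exact ih (by rwa [sub_add_cancel] at hM) ⟨e.i ≫ m, r, by rw [Category.assoc, hr, e.retract]⟩

lemma exists_retract_of_extClosure (hw : H ⊆ w.heart) {X : C} (hX : X ∈ w.heart)
    {a b : ℤ} (ha : a ≤ 0) (hb : 0 ≤ b) {Y : C} (hY : ExtClosure (piecesSet H a b) Y)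
    (e : Retract X Y) : ∃ M ∈ H, Nonempty (Retract X M) := by
  induction b, hb using Int.leInduction generalizing Y with
  | base => exact hadd.exists_retract_of_extClosure_nonpos hw hX ha hY e
  | succ b hb ih =>
    obtain ⟨N, hN, m, hm⟩ := hY.exists_isLeftApprox hadd.zero_mem hw (by omega)
    obtain ⟨i, hi⟩ := hm.exists_lift X (w.mem_wLE_of_mem_le hX.1 (by omega)) e.i
    exact ih (by rwa [add_sub_cancel_right] at hN)
      ⟨i, m ≫ e.r, by rw [← Category.assoc, hi, e.retract]⟩

end IsAdditiveSubcategory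

/-- If `H` is a full additive subcategory generating the triangulated category `C`, and `w`
is a weight structure whose heart contains `H`, then the heart equals the Karoubi envelope
of `H` in `C`: an object lies in the heart iff it is a retract of an object of `H`. -/
theorem heart_eq_karoubiEnvelope
    {C : Type u} [Category.{v} C] [Preadditive C] [HasZeroObject C]
    [HasShift C ℤ] [∀ n : ℤ, (shiftFunctor C n).Additive] [Pretriangulated C]
    (H : Set C) (hadd : IsAdditiveSubcategory H) (hgen : Generates H)
    (w : WeightStructure C) (hw : H ⊆ w.heart) (X : C) :
    X ∈ w.heart ↔ ∃ (M : C) (_ : M ∈ H) (i : X ⟶ M) (r : M ⟶ X), i ≫ r = 𝟙 X := by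
  constructor
  · intro hX
    obtain ⟨a, b, ha, hb, hY⟩ := exists_extClosure_piecesSet_of_isGenerated (hgen X)
    obtain ⟨M, hM, ⟨e⟩⟩ := hadd.exists_retract_of_extClosure hw hX ha hb hY (Retract.refl X)
    exact ⟨M, hM, e.i, e.r, e.retract⟩
  · rintro ⟨M, hM, i, r, hir⟩
    exact ⟨w.retract_le X M i r hir (hw hM).1, w.retract_ge X M i r hir (hw hM).2⟩
end

section
/- Let C be a triangulated category with a weight structure w, and let m ≤ n be integers. Suppose M and N are objects of C admitting weight filtrations M_{≤m-1} →x_- M →x_+ M_{≥n+1} → M_{≤m-1}[1] and N_{≤m-1} →y_- N →y_+ N_{≥n+1} → N_{≤m-1}[1] avoiding weights m,…,n. Then every morphism α : M → N in C extends uniquely to a morphism of triangles: there exist unique morphisms β : M_{≤m-1} → N_{≤m-1} and γ : M_{≥n+1} → N_{≥n+1} with α ∘ x_- = y_- ∘ β and γ ∘ x_+ = y_+ ∘ α, and moreover (β, α, γ) commutes with the connecting morphisms of the two triangles. -/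
open CategoryTheory CategoryTheory.Limits CategoryTheory.Pretriangulated

universe v u

/-! Since both weight filtrations are distinguished, `xm ≫ α` lifts along `ym` as soon as
`xm ≫ α ≫ yp = 0`, the lift completes to a morphism of triangles, and lift and completion
are unique up to maps `MA ⟶ NB⟦-1⟧` and `MA⟦1⟧ ⟶ NB`. Each of these three kinds of maps
goes from weights `≤ a` to weights `≥ b` with `a < b` precisely because `m ≤ n`, so all of
them vanish by orthogonality. -/

section ShiftedSet

variable {C : Type u} [Category.{v} C] [HasShift C ℤ]

lemma shift_mem_shiftedSet {S : Set C} {a : ℤ} {X : C} (hX : X ∈ shiftedSet S a) (b : ℤ) :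
    X⟦b⟧ ∈ shiftedSet S (a + b) := by
  obtain ⟨A, hA, ⟨e⟩⟩ := hX
  exact ⟨A, hA,
    ⟨(shiftFunctor C b).mapIso e ≪≫ ((shiftFunctorAdd' C a b (a + b) rfl).app A).symm⟩⟩

end ShiftedSet

namespace WeightStructure

variable {C : Type u} [Category.{v} C] [Preadditive C] [HasZeroObject C]
  [HasShift C ℤ] [∀ n : ℤ, (shiftFunctor C n).Additive] [Pretriangulated C]
  (w : WeightStructure C)

lemma mem_le_of_mem_wLE_zero {X : C} (hX : X ∈ w.wLE 0) : X ∈ w.le := by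
  obtain ⟨A, hA, ⟨e⟩⟩ := hX
  exact w.mem_le_of_iso (e ≪≫ (shiftFunctorZero C ℤ).app A) hA

lemma wGE_add_one_subset_wGE (a : ℤ) : w.wGE (a + 1) ⊆ w.wGE a := by
  rintro X ⟨B, hB, ⟨e⟩⟩
  exact ⟨B⟦(1 : ℤ)⟧, w.ge_shift ⟨B, hB, ⟨Iso.refl _⟩⟩,
    ⟨e ≪≫ (shiftFunctorAdd' C 1 a (a + 1) (add_comm 1 a)).app B⟩⟩

lemma wGE_antitone_s5 {a b : ℤ} (hab : a ≤ b) : w.wGE b ⊆ w.wGE a := by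
  induction b, hab using Int.leInduction with
  | base => exact le_rfl
  | succ b _ ih => exact (w.wGE_add_one_subset_wGE b).trans ih

lemma hom_eq_zero_of_wLE_of_wGE {a b : ℤ} (hab : a < b) {X Y : C} (hX : X ∈ w.wLE a)
    (hY : Y ∈ w.wGE b) (f : X ⟶ Y) : f = 0 := by
  apply (shiftFunctor C (-a)).map_injective
  rw [Functor.map_zero]
  refine w.orth _ _ (w.mem_le_of_mem_wLE_zero ?_)
    (w.wGE_antitone_s5 (a := 1) (by omega) (shift_mem_shiftedSet hY (-a))) _
  simpa [wLE] using shift_mem_shiftedSet hX (-a)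

end WeightStructure

section Triangle

variable {C : Type u} [Category.{v} C] [Preadditive C] [HasZeroObject C]
  [HasShift C ℤ] [∀ n : ℤ, (shiftFunctor C n).Additive] [Pretriangulated C]
  {T T' : Triangle C}

lemma Triangle.eq_of_comp_mor₁_eq (hT : T ∈ distTriang C) {X : C} {f f' : X ⟶ T.obj₁}
    (h : f ≫ T.mor₁ = f' ≫ T.mor₁) (hX : ∀ g : X ⟶ T.obj₃⟦(-1 : ℤ)⟧, g = 0) : f = f' := by
  rw [← sub_eq_zero]
  have hsub : (f - f') ≫ T.mor₁ = 0 := by rw [Preadditive.sub_comp, h, sub_self]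
  obtain ⟨g, hg⟩ := Triangle.coyoneda_exact₂ _ (inv_rot_of_distTriang _ hT) (f - f') hsub
  rw [hg, hX g]
  exact zero_comp

lemma Triangle.eq_of_mor₂_comp_eq (hT : T ∈ distTriang C) {Y : C} {f f' : T.obj₃ ⟶ Y}
    (h : T.mor₂ ≫ f = T.mor₂ ≫ f') (hY : ∀ g : T.obj₁⟦(1 : ℤ)⟧ ⟶ Y, g = 0) : f = f' := by
  rw [← sub_eq_zero]
  have hsub : T.mor₂ ≫ (f - f') = 0 := by rw [Preadditive.comp_sub, h, sub_self]
  obtain ⟨g, hg⟩ := Triangle.yoneda_exact₃ _ hT (f - f') hsub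
  rw [hg, hY g, comp_zero]

lemma Triangle.existsUnique_hom_of_comp_eq_zero (hT : T ∈ distTriang C)
    (hT' : T' ∈ distTriang C) (α : T.obj₂ ⟶ T'.obj₂) (hα : T.mor₁ ≫ α ≫ T'.mor₂ = 0)
    (h₁ : ∀ g : T.obj₁ ⟶ T'.obj₃⟦(-1 : ℤ)⟧, g = 0)
    (h₃ : ∀ g : T.obj₁⟦(1 : ℤ)⟧ ⟶ T'.obj₃, g = 0) :
    ∃! p : (T.obj₁ ⟶ T'.obj₁) × (T.obj₃ ⟶ T'.obj₃),
      T.mor₁ ≫ α = p.1 ≫ T'.mor₁ ∧ T.mor₂ ≫ p.2 = α ≫ T'.mor₂ ∧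
        T.mor₃ ≫ p.1⟦(1 : ℤ)⟧' = p.2 ≫ T'.mor₃ := by
  obtain ⟨β, hβ⟩ := Triangle.coyoneda_exact₂ _ hT' (T.mor₁ ≫ α) (by rw [Category.assoc, hα])
  obtain ⟨γ, hγ₂, hγ₃⟩ := complete_distinguished_triangle_morphism T T' hT hT' β α hβ
  refine ⟨(β, γ), ⟨hβ, hγ₂, hγ₃⟩, ?_⟩
  rintro ⟨β', γ'⟩ ⟨hβ', hγ', -⟩
  rw [Prod.mk.injEq]
  exact ⟨Triangle.eq_of_comp_mor₁_eq hT' (hβ'.symm.trans hβ) h₁,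
    Triangle.eq_of_mor₂_comp_eq hT (hγ'.trans hγ₂.symm) h₃⟩

end Triangle

/-- Functoriality of weight filtrations avoiding weights `m, …, n`: any morphism `M ⟶ N`
extends uniquely to a morphism of the corresponding exact triangles. -/
theorem weightFiltration_functorial
    {C : Type u} [Category.{v} C] [Preadditive C] [HasZeroObject C]
    [HasShift C ℤ] [∀ n : ℤ, (shiftFunctor C n).Additive] [Pretriangulated C]
    (w : WeightStructure C) (m n : ℤ) (hmn : m ≤ n)
    (M N MA MB NA NB : C)
    (xm : MA ⟶ M) (xp : M ⟶ MB) (dM : MB ⟶ MA⟦(1:ℤ)⟧)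
    (hM : Triangle.mk xm xp dM ∈ distTriang C)
    (hMA : MA ∈ w.wLE (m - 1)) (hMB : MB ∈ w.wGE (n + 1))
    (ym : NA ⟶ N) (yp : N ⟶ NB) (dN : NB ⟶ NA⟦(1:ℤ)⟧)
    (hN : Triangle.mk ym yp dN ∈ distTriang C)
    (hNA : NA ∈ w.wLE (m - 1)) (hNB : NB ∈ w.wGE (n + 1))
    (α : M ⟶ N) :
    ∃! p : (MA ⟶ NA) × (MB ⟶ NB),
      xm ≫ α = p.1 ≫ ym ∧ xp ≫ p.2 = α ≫ yp ∧
        dM ≫ (shiftFunctor C (1:ℤ)).map p.1 = p.2 ≫ dN :=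
  Triangle.existsUnique_hom_of_comp_eq_zero hM hN α
    (w.hom_eq_zero_of_wLE_of_wGE (by omega) hMA hNB _)
    (w.hom_eq_zero_of_wLE_of_wGE (by omega) hMA (shift_mem_shiftedSet hNB (-1)))
    (w.hom_eq_zero_of_wLE_of_wGE (by omega) (shift_mem_shiftedSet hMA 1) hNB)
end
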